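/- arXiv:0807.3396 — 4 statements merged into one kernel-verified Lean document; each statement's English description precedes it below -/
import Mathlib

section
/- Let (N_1, …, N_k) be a multinomial random vector with parameters n and (p_1, …, p_k) (i.e., the counts in k cells of n independent trials with cell probabilities p_1, …, p_k summing to 1). Then for every ε > 0, P( Σ_{i=1}^k |N_i/n − p_i| ≥ ε ) ≤ 2^{k+1} e^{−n ε² / 2}. -/
/-!
Write `N_j` for the cell counts and `N(A) = ∑_{j ∈ A} N_j`, `p(A) = ∑_{j ∈ A} p_j` for a set `A`
of cells. Since `∑_j (N_j/n - p_j) = 0`, the ℓ¹ deviation is twice `N(A)/n - p(A)` for the set `A`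
of cells with `N_j/n ≥ p_j`. For each of the `2^k` sets `A`, `N(A)` is a sum of `n` independent
Bernoulli(`p(A)`) indicators, so Hoeffding's inequality bounds `P(N(A) - n p(A) ≥ nε/2)` by
`e^{-nε²/2}`, and a union bound over `A` finishes.
-/

open MeasureTheory ProbabilityTheory Finset Real

theorem Finset.exists_sum_abs_eq_two_mul_sum_of_sum_eq_zero {ι : Type*} (s : Finset ι)
    (x : ι → ℝ) (hx : ∑ i ∈ s, x i = 0) : ∃ t ⊆ s, ∑ i ∈ s, |x i| = 2 * ∑ i ∈ t, x i := by
  refine ⟨{i ∈ s | 0 ≤ x i}, filter_subset _ _, ?_⟩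
  have hsplit := sum_filter_add_sum_filter_not s (fun i => 0 ≤ x i) x
  have habs : ∑ i ∈ s, |x i| = ∑ i ∈ s with 0 ≤ x i, x i - ∑ i ∈ s with ¬0 ≤ x i, x i := by
    rw [← sum_filter_add_sum_filter_not s (fun i => 0 ≤ x i), sub_eq_add_neg, ← sum_neg_distrib]
    congr 1
    · exact sum_congr rfl fun i hi => abs_of_nonneg (mem_filter.mp hi).2
    · exact sum_congr rfl fun i hi => abs_of_neg (not_le.mp (mem_filter.mp hi).2)
  linarith

theorem Finset.sum_indicator_one_comp_eq_sum_card_filter {ι α : Type*} [DecidableEq α]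
    (s : Finset ι) (z : ι → α) (A : Finset α) :
    ∑ i ∈ s, (A : Set α).indicator (1 : α → ℝ) (z i) = ∑ j ∈ A, (#{i ∈ s | z i = j} : ℝ) := by
  simp_rw [Set.indicator_apply, mem_coe, Pi.one_apply, sum_boole]
  rw [card_eq_sum_card_fiberwise (s := {i ∈ s | z i ∈ A}) (f := z) (t := A)
    fun i hi => (mem_filter.mp hi).2]
  push_cast
  refine sum_congr rfl fun j hj => ?_
  rw [filter_filter, filter_congr fun i _ => and_iff_right_of_imp fun h => h ▸ hj]

theorem measureReal_sum_range_sub_integral_ge_le {Ω : Type*} [MeasurableSpace Ω]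
    {μ : Measure Ω} [IsProbabilityMeasure μ] {X : ℕ → Ω → ℝ} (hX : ∀ i, AEMeasurable (X i) μ)
    (hindep : iIndepFun X μ) (hbound : ∀ i, ∀ᵐ ω ∂μ, X i ω ∈ Set.Icc (0 : ℝ) 1) (n : ℕ)
    {t : ℝ} (ht : 0 ≤ t) :
    μ.real {ω | t ≤ ∑ i ∈ range n, (X i ω - μ[X i])} ≤ exp (-2 * t ^ 2 / n) := by
  have hindep' : iIndepFun (fun i ω => X i ω - μ[X i]) μ :=
    hindep.comp (fun i (x : ℝ) => x - ∫ ω, X i ω ∂μ) fun _ => measurable_sub_const _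
  have hsubG : ∀ i < n, HasSubgaussianMGF (fun ω => X i ω - μ[X i]) (1 / 4) μ := by
    intro i _
    convert hasSubgaussianMGF_of_mem_Icc (hX i) (hbound i)
    ext; norm_num
  calc _ ≤ exp (-t ^ 2 / (2 * n * (1 / 4 : NNReal))) :=
        HasSubgaussianMGF.measure_sum_range_ge_le_of_iIndepFun hindep' hsubG ht
    _ = exp (-2 * t ^ 2 / n) := by
        congr 1
        push_cast
        ring

theorem measureReal_sum_range_indicator_comp_sub_ge_le {Ω α : Type*} [MeasurableSpace Ω]
    [MeasurableSpace α] [MeasurableSingletonClass α] {μ : Measure Ω} [IsProbabilityMeasure μ]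
    {Z : ℕ → Ω → α} (hZ : ∀ i, Measurable (Z i)) (hindep : iIndepFun Z μ) (A : Finset α)
    {q : ℝ} (hq : ∀ i, μ.real (Z i ⁻¹' A) = q) (n : ℕ) {t : ℝ} (ht : 0 ≤ t) :
    μ.real {ω | t ≤ ∑ i ∈ range n, ((A : Set α).indicator 1 (Z i ω) - q)} ≤
      exp (-2 * t ^ 2 / n) := by
  have hA : MeasurableSet (A : Set α) := A.measurableSet
  set X : ℕ → Ω → ℝ := fun i => (A : Set α).indicator 1 ∘ Z i
  have hmean (i : ℕ) : μ[X i] = q := by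
    rw [← hq i, ← integral_indicator_one ((hZ i) hA)]
    rfl
  have h := measureReal_sum_range_sub_integral_ge_le (X := X)
    (fun i => ((measurable_const.indicator hA).comp (hZ i)).aemeasurable)
    (hindep.comp (fun _ => (A : Set α).indicator 1) fun _ => measurable_const.indicator hA)
    (fun i => ae_of_all _ fun ω => ?_) n ht
  · simp only [hmean] at h
    exact h
  · by_cases hmem : Z i ω ∈ (A : Set α) <;> simp [X, hmem]

theorem exists_finset_mul_le_sum_indicator_sub {α : Type*} [Fintype α] [DecidableEq α]
    (z : ℕ → α) (p : α → ℝ) (hp1 : ∑ j, p j = 1) {n : ℕ} {ε : ℝ}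
    (h : ε ≤ ∑ j, |(#{i ∈ range n | z i = j} : ℝ) / n - p j|) :
    ∃ A : Finset α, n * ε / 2 ≤ ∑ i ∈ range n, ((A : Set α).indicator 1 (z i) - ∑ j ∈ A, p j) := by
  rcases n.eq_zero_or_pos with rfl | hn
  · exact ⟨∅, by simp⟩
  have hn' : (n : ℝ) ≠ 0 := by positivity
  have hcount (A : Finset α) : ∑ i ∈ range n, ((A : Set α).indicator 1 (z i) - ∑ j ∈ A, p j) =
      n * ∑ j ∈ A, ((#{i ∈ range n | z i = j} : ℝ) / n - p j) := by
    rw [sum_sub_distrib, sum_indicator_one_comp_eq_sum_card_filter, sum_const, card_range,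
      nsmul_eq_mul, sum_sub_distrib, ← sum_div]
    field_simp
  have hsum : ∑ j, ((#{i ∈ range n | z i = j} : ℝ) / n - p j) = 0 := by
    have := hcount univ
    simp only [coe_univ, Set.indicator_univ, Pi.one_apply, hp1, sub_self, sum_const_zero] at this
    exact (mul_eq_zero.mp this.symm).resolve_left hn'
  obtain ⟨A, -, hA⟩ := exists_sum_abs_eq_two_mul_sum_of_sum_eq_zero univ _ hsum
  refine ⟨A, ?_⟩
  rw [hcount]
  nlinarith

/-- Multinomial deviation inequality: if `(N_1, …, N_k)` are the cell
counts of `n` i.i.d. trials with cell probabilities `p_1, …, p_k`, then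
`P(Σ_j |N_j/n − p_j| ≥ ε) ≤ 2^{k+1} e^{−nε²/2}`. -/
theorem multinomial_L1_deviation_bound
    (k n : ℕ) (p : Fin k → ℝ)
    (hp : ∀ j, 0 ≤ p j) (hp1 : ∑ j, p j = 1)
    (Ω : Type*) [MeasurableSpace Ω] (μ : Measure Ω) [IsProbabilityMeasure μ]
    (Z : ℕ → Ω → Fin k) (hZmeas : ∀ i, Measurable (Z i))
    (hZindep : iIndepFun Z μ)
    (hZdist : ∀ i : ℕ, ∀ j : Fin k, μ {ω | Z i ω = j} = ENNReal.ofReal (p j))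
    (ε : ℝ) (hε : 0 < ε) :
    μ {ω | ε ≤ ∑ j : Fin k,
        |(((Finset.range n).filter (fun i => Z i ω = j)).card : ℝ) / (n : ℝ) - p j|}
      ≤ ENNReal.ofReal ((2 : ℝ) ^ (k + 1) * Real.exp (-((n : ℝ) * ε ^ 2) / 2)) := by
  set E : Finset (Fin k) → Set Ω := fun A =>
    {ω | n * ε / 2 ≤ ∑ i ∈ range n, ((A : Set (Fin k)).indicator 1 (Z i ω) - ∑ j ∈ A, p j)}
  have hlaw (A : Finset (Fin k)) (i : ℕ) : μ.real (Z i ⁻¹' A) = ∑ j ∈ A, p j := by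
    rw [← sum_measureReal_preimage_singleton A fun j _ => hZmeas i (measurableSet_singleton j)]
    refine sum_congr rfl fun j _ => ?_
    rw [measureReal_def, ← ENNReal.toReal_ofReal (hp j), ← hZdist i j]
    rfl
  have htail (A : Finset (Fin k)) : μ.real (E A) ≤ exp (-(n * ε ^ 2) / 2) := by
    convert measureReal_sum_range_indicator_comp_sub_ge_le hZmeas hZindep A (hlaw A) n
      (by positivity : (0 : ℝ) ≤ n * ε / 2) using 2
    rcases n.eq_zero_or_pos with rfl | hn
    · simp
    · field_simp
  calc μ _ ≤ μ (⋃ A, E A) := measure_mono fun ω hω =>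
        Set.mem_iUnion.mpr (exists_finset_mul_le_sum_indicator_sub (Z · ω) p hp1 hω)
    _ = ENNReal.ofReal (μ.real (⋃ A, E A)) := (ofReal_measureReal).symm
    _ ≤ ENNReal.ofReal (∑ _A : Finset (Fin k), exp (-(n * ε ^ 2) / 2)) :=
        ENNReal.ofReal_le_ofReal <|
          (measureReal_iUnion_fintype_le E).trans (sum_le_sum fun A _ => htail A)
    _ ≤ ENNReal.ofReal ((2 : ℝ) ^ (k + 1) * exp (-(n * ε ^ 2) / 2)) := by
        rw [sum_const, card_univ, Fintype.card_finset, Fintype.card_fin, nsmul_eq_mul]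
        gcongr
        push_cast
        exact pow_le_pow_right₀ one_le_two k.le_succ
end

section
/- Let (f_x)_{x∈[a,b]} be a channel on [a,b] with continuity modulus ξ_Δ, let Λ : [a,b] × [a,b] → [0,∞) be a measurable loss function with Λ_max = sup Λ < ∞ and modulus λ(Δ), and let g : ℝ → [a,b] be measurable. Define A : [a,b] → ℝ by A(x) = ∫_ℝ Λ(x, g(y)) f_x(y) dy. Then for all x, x' ∈ [a,b] with |x − x'| ≤ Δ, |A(x) − A(x')| ≤ λ(Δ) + Λ_max·ξ_Δ + λ(Δ)·ξ_Δ. In particular, if ‖Λ‖_L < ∞ and ‖Ξ‖_L < ∞ then A is Lipschitz with Lipschitz constant at most ‖Λ‖_L + Λ_max·‖Ξ‖_L + (b−a)·‖Λ‖_L·‖Ξ‖_L, and A is bounded by Λ_max. -/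
open MeasureTheory

/-- The continuity modulus of a channel:
`ξ_Δ = sup { ∫ |f_x − f_{x'}| : x, x' ∈ [a,b], |x − x'| ≤ Δ }`. -/
noncomputable def channelMod (a b : ℝ) (F : ℝ → ℝ → ℝ) (Δ : ℝ) : ℝ :=
  sSup {r : ℝ | ∃ x ∈ Set.Icc a b, ∃ x' ∈ Set.Icc a b, |x - x'| ≤ Δ ∧
    r = ∫ y : ℝ, |F x y - F x' y|}

/-- The modulus of continuity of a loss function in its first argument:
`λ(Δ) = sup { |Λ(x,x̂) − Λ(x',x̂)| : x̂, x, x' ∈ [a,b], |x − x'| ≤ Δ }`. -/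
noncomputable def lossMod (a b : ℝ) (Λ : ℝ → ℝ → ℝ) (Δ : ℝ) : ℝ :=
  sSup {r : ℝ | ∃ xhat ∈ Set.Icc a b, ∃ x ∈ Set.Icc a b, ∃ x' ∈ Set.Icc a b,
    |x - x'| ≤ Δ ∧ r = |Λ x xhat - Λ x' xhat|}

/-- The Lipschitz norm `sup_{0<Δ<b−a} mod(Δ)/Δ` of a modulus of continuity. -/
noncomputable def lipNormOfMod (a b : ℝ) (mod : ℝ → ℝ) : ℝ :=
  sSup {r : ℝ | ∃ Δ : ℝ, 0 < Δ ∧ Δ < b - a ∧ r = mod Δ / Δ}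

/-!
Write `A(x) − A(x') = ∫ (Λ(x, g) − Λ(x', g)) f_x + ∫ Λ(x', g) (f_x − f_{x'})`. The first
integral is at most `λ(Δ)` because `f_x` is a probability density, the second at most
`Λ_max ξ_Δ`. For the Lipschitz bound, apply this at the midpoint of `x` and `x'` with the
step `|x − x'| / 2`, which lies strictly below `b − a` as the Lipschitz norms require.
-/

open Set

section ProbabilityDensity

variable {α : Type*} [MeasurableSpace α] {μ : Measure α} {p q : α → ℝ}

theorem abs_integral_mul_le_of_abs_le {w : α → ℝ} {M : ℝ} (hw : ∀ y, |w y| ≤ M)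
    (hp0 : ∀ y, 0 ≤ p y) (hp1 : ∫ y, p y ∂μ = 1) : |∫ y, w y * p y ∂μ| ≤ M := by
  have hp : Integrable p μ := .of_integral_ne_zero (hp1 ▸ one_ne_zero)
  calc |∫ y, w y * p y ∂μ| ≤ ∫ y, M * p y ∂μ :=
        norm_integral_le_of_norm_le (f := fun y => w y * p y) (hp.const_mul M)
          (ae_of_all _ fun y => by
            rw [Real.norm_eq_abs, abs_mul, abs_of_nonneg (hp0 y)]
            exact mul_le_mul_of_nonneg_right (hw y) (hp0 y))
    _ = M := by rw [integral_const_mul, hp1, mul_one]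

theorem abs_integral_mul_sub_le {v : α → ℝ} {M : ℝ} (hv : ∀ y, |v y| ≤ M)
    (hp : Integrable p μ) (hq : Integrable q μ) :
    |∫ y, v y * (p y - q y) ∂μ| ≤ M * ∫ y, |p y - q y| ∂μ := by
  calc |∫ y, v y * (p y - q y) ∂μ| ≤ ∫ y, M * |p y - q y| ∂μ :=
        norm_integral_le_of_norm_le ((hp.sub hq).abs.const_mul M) (ae_of_all _ fun y => by
          rw [Real.norm_eq_abs, abs_mul]
          gcongr
          exact hv y)
    _ = M * ∫ y, |p y - q y| ∂μ := integral_const_mul M _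

theorem integral_abs_sub_le_two (hp0 : ∀ y, 0 ≤ p y) (hp1 : ∫ y, p y ∂μ = 1)
    (hq0 : ∀ y, 0 ≤ q y) (hq1 : ∫ y, q y ∂μ = 1) : ∫ y, |p y - q y| ∂μ ≤ 2 := by
  have hp : Integrable p μ := .of_integral_ne_zero (hp1 ▸ one_ne_zero)
  have hq : Integrable q μ := .of_integral_ne_zero (hq1 ▸ one_ne_zero)
  calc ∫ y, |p y - q y| ∂μ ≤ ∫ y, (p y + q y) ∂μ :=
        integral_mono (hp.sub hq).abs (hp.add hq) fun y => by
          have := abs_sub (p y) (q y)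
          rwa [abs_of_nonneg (hp0 y), abs_of_nonneg (hq0 y)] at this
    _ = 2 := by rw [integral_add hp hq, hp1, hq1]; norm_num

theorem abs_integral_mul_sub_integral_mul_le {u v : α → ℝ} {M ε : ℝ}
    (hu : AEStronglyMeasurable u μ) (hv : AEStronglyMeasurable v μ)
    (huM : ∀ y, |u y| ≤ M) (hvM : ∀ y, |v y| ≤ M) (huv : ∀ y, |u y - v y| ≤ ε)
    (hp0 : ∀ y, 0 ≤ p y) (hp1 : ∫ y, p y ∂μ = 1) (hq : Integrable q μ) :
    |∫ y, u y * p y ∂μ - ∫ y, v y * q y ∂μ| ≤ ε + M * ∫ y, |p y - q y| ∂μ := by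
  have hp : Integrable p μ := .of_integral_ne_zero (hp1 ▸ one_ne_zero)
  have hup : Integrable (fun y => u y * p y) μ := hp.bdd_mul hu (ae_of_all _ huM)
  have hvp : Integrable (fun y => v y * p y) μ := hp.bdd_mul hv (ae_of_all _ hvM)
  have hvq : Integrable (fun y => v y * q y) μ := hq.bdd_mul hv (ae_of_all _ hvM)
  have hsplit : ∫ y, u y * p y ∂μ - ∫ y, v y * q y ∂μ =
      ∫ y, (u y - v y) * p y ∂μ + ∫ y, v y * (p y - q y) ∂μ := by
    simp only [sub_mul, mul_sub]
    rw [integral_sub hup hvp, integral_sub hvp hvq]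
    ring
  rw [hsplit]
  exact (abs_add_le _ _).trans (add_le_add (abs_integral_mul_le_of_abs_le huv hp0 hp1)
    (abs_integral_mul_sub_le hvM hp hq))

end ProbabilityDensity

section Moduli

theorem lossMod_nonneg (a b : ℝ) (Λ : ℝ → ℝ → ℝ) (Δ : ℝ) : 0 ≤ lossMod a b Λ Δ :=
  Real.sSup_nonneg (by rintro r ⟨_, _, _, _, _, _, _, rfl⟩; exact abs_nonneg _)

theorem channelMod_nonneg (a b : ℝ) (F : ℝ → ℝ → ℝ) (Δ : ℝ) : 0 ≤ channelMod a b F Δ :=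
  Real.sSup_nonneg (by
    rintro r ⟨_, _, _, _, _, rfl⟩
    exact integral_nonneg fun _ => abs_nonneg _)

theorem lipNormOfMod_nonneg (a b : ℝ) {mod : ℝ → ℝ} (hmod : ∀ Δ, 0 ≤ mod Δ) :
    0 ≤ lipNormOfMod a b mod :=
  Real.sSup_nonneg (by rintro r ⟨Δ, hΔ, _, rfl⟩; exact div_nonneg (hmod Δ) hΔ.le)

variable {a b : ℝ}

theorem le_lipNormOfMod_mul {mod : ℝ → ℝ}
    (hbdd : BddAbove {r : ℝ | ∃ Δ : ℝ, 0 < Δ ∧ Δ < b - a ∧ r = mod Δ / Δ})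
    {Δ : ℝ} (hΔ : 0 < Δ) (hΔb : Δ < b - a) : mod Δ ≤ lipNormOfMod a b mod * Δ :=
  (div_le_iff₀ hΔ).1 (le_csSup hbdd ⟨Δ, hΔ, hΔb, rfl⟩)

theorem abs_sub_le_lossMod {Λ : ℝ → ℝ → ℝ} {M : ℝ}
    (hΛ : ∀ x ∈ Icc a b, ∀ xh ∈ Icc a b, |Λ x xh| ≤ M) {Δ x x' xh : ℝ}
    (hx : x ∈ Icc a b) (hx' : x' ∈ Icc a b) (hxh : xh ∈ Icc a b) (hΔ : |x - x'| ≤ Δ) :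
    |Λ x xh - Λ x' xh| ≤ lossMod a b Λ Δ := by
  refine le_csSup ⟨M + M, ?_⟩ ⟨xh, hxh, x, hx, x', hx', hΔ, rfl⟩
  rintro r ⟨xh, hxh, x, hx, x', hx', -, rfl⟩
  exact (abs_sub _ _).trans (add_le_add (hΛ x hx xh hxh) (hΛ x' hx' xh hxh))

theorem integral_abs_sub_le_channelMod {F : ℝ → ℝ → ℝ}
    (hFnn : ∀ x ∈ Icc a b, ∀ y, 0 ≤ F x y) (hFprob : ∀ x ∈ Icc a b, ∫ y, F x y = 1)
    {Δ x x' : ℝ} (hx : x ∈ Icc a b) (hx' : x' ∈ Icc a b) (hΔ : |x - x'| ≤ Δ) :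
    ∫ y, |F x y - F x' y| ≤ channelMod a b F Δ := by
  refine le_csSup ⟨2, ?_⟩ ⟨x, hx, x', hx', hΔ, rfl⟩
  rintro r ⟨x, hx, x', hx', -, rfl⟩
  exact integral_abs_sub_le_two (hFnn x hx) (hFprob x hx) (hFnn x' hx') (hFprob x' hx')

theorem abs_sub_integral_le_lossMod_add_mul_channelMod {F Λ : ℝ → ℝ → ℝ} {g : ℝ → ℝ} {M : ℝ}
    (hFnn : ∀ x ∈ Icc a b, ∀ y, 0 ≤ F x y) (hFprob : ∀ x ∈ Icc a b, ∫ y, F x y = 1)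
    (hΛmeas : Measurable (Function.uncurry Λ))
    (hΛ : ∀ x ∈ Icc a b, ∀ xh ∈ Icc a b, |Λ x xh| ≤ M)
    (hgmeas : Measurable g) (hgr : ∀ y, g y ∈ Icc a b)
    {Δ x x' : ℝ} (hx : x ∈ Icc a b) (hx' : x' ∈ Icc a b) (hΔ : |x - x'| ≤ Δ) :
    |(∫ y, Λ x (g y) * F x y) - ∫ y, Λ x' (g y) * F x' y|
      ≤ lossMod a b Λ Δ + M * channelMod a b F Δ := by
  have hΛg (x : ℝ) : Measurable fun y => Λ x (g y) :=
    hΛmeas.comp (measurable_const.prodMk hgmeas)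
  have hM : 0 ≤ M := (abs_nonneg _).trans (hΛ x hx x hx)
  have hFx' : Integrable (F x') := .of_integral_ne_zero ((hFprob x' hx').symm ▸ one_ne_zero)
  refine (abs_integral_mul_sub_integral_mul_le (hΛg x).aestronglyMeasurable
    (hΛg x').aestronglyMeasurable (fun y => hΛ x hx _ (hgr y)) (fun y => hΛ x' hx' _ (hgr y))
    (fun y => abs_sub_le_lossMod hΛ hx hx' (hgr y) hΔ) (hFnn x hx) (hFprob x hx) hFx').trans ?_
  gcongr
  exact integral_abs_sub_le_channelMod hFnn hFprob hx hx' hΔ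

theorem abs_sub_le_mul_abs_sub_of_modulus {A ω : ℝ → ℝ} {K : ℝ}
    (hA : ∀ Δ, 0 < Δ → ∀ x ∈ Icc a b, ∀ x' ∈ Icc a b, |x - x'| ≤ Δ → |A x - A x'| ≤ ω Δ)
    (hω : ∀ Δ, 0 < Δ → Δ < b - a → ω Δ ≤ K * Δ) {x x' : ℝ}
    (hx : x ∈ Icc a b) (hx' : x' ∈ Icc a b) : |A x - A x'| ≤ K * |x - x'| := by
  rcases eq_or_ne x x' with rfl | hne
  · simp
  set m := (x + x') / 2 with hm_def
  set Δ := |x - x'| / 2 with hΔ_def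
  have hΔ : 0 < Δ := half_pos (abs_pos.2 (sub_ne_zero.2 hne))
  have hΔb : Δ < b - a := by
    have : |x - x'| ≤ b - a :=
      abs_sub_le_iff.2 ⟨by linarith [hx.2, hx'.1], by linarith [hx.1, hx'.2]⟩
    linarith
  have hm : m ∈ Icc a b := ⟨by linarith [hx.1, hx'.1], by linarith [hx.2, hx'.2]⟩
  have hxm : |x - m| ≤ Δ := by
    rw [show x - m = (x - x') / 2 by ring, abs_div, abs_two]
  have hmx' : |m - x'| ≤ Δ := by
    rw [show m - x' = (x - x') / 2 by ring, abs_div, abs_two]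
  calc |A x - A x'| ≤ |A x - A m| + |A m - A x'| := abs_sub_le _ _ _
    _ ≤ K * Δ + K * Δ := add_le_add ((hA Δ hΔ x hx m hm hxm).trans (hω Δ hΔ hΔb))
        ((hA Δ hΔ m hm x' hx' hmx').trans (hω Δ hΔ hΔb))
    _ = K * |x - x'| := by ring

end Moduli

theorem expected_loss_modulus_and_lipschitz_general
    (a b : ℝ)
    -- the channel
    (F : ℝ → ℝ → ℝ)
    (hFnn : ∀ x ∈ Set.Icc a b, ∀ y : ℝ, 0 ≤ F x y)
    (hFprob : ∀ x ∈ Set.Icc a b, ∫ y : ℝ, F x y = 1)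
    -- the loss function and its supremum
    (Λ : ℝ → ℝ → ℝ) (hΛmeas : Measurable (Function.uncurry Λ))
    (hΛnn : ∀ x ∈ Set.Icc a b, ∀ x' ∈ Set.Icc a b, 0 ≤ Λ x x')
    (Λmax : ℝ)
    (hΛmax : IsLUB (Set.image2 Λ (Set.Icc a b) (Set.Icc a b)) Λmax)
    -- the denoising rule
    (g : ℝ → ℝ) (hgmeas : Measurable g) (hgr : ∀ y : ℝ, g y ∈ Set.Icc a b)
    -- the expected-loss map
    (A : ℝ → ℝ) (hA : ∀ x : ℝ, A x = ∫ y : ℝ, Λ x (g y) * F x y) :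
    (∀ Δ : ℝ, 0 < Δ → ∀ x ∈ Set.Icc a b, ∀ x' ∈ Set.Icc a b, |x - x'| ≤ Δ →
      |A x - A x'| ≤ lossMod a b Λ Δ + Λmax * channelMod a b F Δ
        + lossMod a b Λ Δ * channelMod a b F Δ) ∧
    (BddAbove {r : ℝ | ∃ Δ : ℝ, 0 < Δ ∧ Δ < b - a ∧ r = lossMod a b Λ Δ / Δ} →
     BddAbove {r : ℝ | ∃ Δ : ℝ, 0 < Δ ∧ Δ < b - a ∧ r = channelMod a b F Δ / Δ} →
      (∀ x ∈ Set.Icc a b, ∀ x' ∈ Set.Icc a b,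
        |A x - A x'| ≤ (lipNormOfMod a b (lossMod a b Λ)
          + Λmax * lipNormOfMod a b (channelMod a b F)
          + (b - a) * lipNormOfMod a b (lossMod a b Λ)
              * lipNormOfMod a b (channelMod a b F)) * |x - x'|) ∧
      (∀ x ∈ Set.Icc a b, |A x| ≤ Λmax)) := by
  obtain ⟨_, x₀, hx₀, xh₀, hxh₀, rfl⟩ := hΛmax.nonempty
  have hΛmax0 : 0 ≤ Λmax := (hΛnn x₀ hx₀ xh₀ hxh₀).trans (hΛmax.1 ⟨x₀, hx₀, xh₀, hxh₀, rfl⟩)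
  have hΛbound : ∀ x ∈ Icc a b, ∀ xh ∈ Icc a b, |Λ x xh| ≤ Λmax := fun x hx xh hxh =>
    abs_le.2 ⟨by linarith [hΛnn x hx xh hxh], hΛmax.1 ⟨x, hx, xh, hxh, rfl⟩⟩
  have key : ∀ Δ, ∀ x ∈ Icc a b, ∀ x' ∈ Icc a b, |x - x'| ≤ Δ →
      |A x - A x'| ≤ lossMod a b Λ Δ + Λmax * channelMod a b F Δ := fun Δ x hx x' hx' hΔ => by
    rw [hA, hA]
    exact abs_sub_integral_le_lossMod_add_mul_channelMod hFnn hFprob hΛmeas hΛbound hgmeas hgr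
      hx hx' hΔ
  set L := lipNormOfMod a b (lossMod a b Λ)
  set K := lipNormOfMod a b (channelMod a b F)
  have hLK : 0 ≤ L * K := mul_nonneg (lipNormOfMod_nonneg a b (lossMod_nonneg a b Λ))
    (lipNormOfMod_nonneg a b (channelMod_nonneg a b F))
  refine ⟨fun Δ _ x hx x' hx' hΔ => (key Δ x hx x' hx' hΔ).trans (le_add_of_nonneg_right
      (mul_nonneg (lossMod_nonneg a b Λ Δ) (channelMod_nonneg a b F Δ))),
    fun hL hK => ⟨fun x hx x' hx' => abs_sub_le_mul_abs_sub_of_modulus (fun Δ _ => key Δ)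
      (fun Δ hΔ hΔb => ?_) hx hx', fun x hx => ?_⟩⟩
  · calc lossMod a b Λ Δ + Λmax * channelMod a b F Δ ≤ L * Δ + Λmax * (K * Δ) :=
          add_le_add (le_lipNormOfMod_mul hL hΔ hΔb)
            (mul_le_mul_of_nonneg_left (le_lipNormOfMod_mul hK hΔ hΔb) hΛmax0)
      _ ≤ (L + Λmax * K + (b - a) * L * K) * Δ := by
          nlinarith [mul_nonneg (mul_nonneg (hΔ.trans hΔb).le hLK) hΔ.le]
  · rw [hA]
    exact abs_integral_mul_le_of_abs_le (fun y => hΛbound x hx _ (hgr y)) (hFnn x hx) (hFprob x hx)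

/-- The map `A(x) = ∫ Λ(x, g(y)) f_x(y) dy` inherits the moduli of
continuity of the loss and the channel: `|A(x) − A(x')| ≤ λ(Δ) + Λ_max ξ_Δ + λ(Δ) ξ_Δ`
whenever `|x − x'| ≤ Δ`; if moreover `‖Λ‖_L` and `‖Ξ‖_L` are finite, then `A` is
Lipschitz with constant at most `‖Λ‖_L + Λ_max ‖Ξ‖_L + (b−a) ‖Λ‖_L ‖Ξ‖_L` and bounded
by `Λ_max`. -/
theorem expected_loss_modulus_and_lipschitz
    (a b : ℝ) (hab : a < b)
    -- the channel
    (F : ℝ → ℝ → ℝ)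
    (hFmeas : Measurable (Function.uncurry F))
    (hFnn : ∀ x ∈ Set.Icc a b, ∀ y : ℝ, 0 ≤ F x y)
    (hFprob : ∀ x ∈ Set.Icc a b, ∫ y : ℝ, F x y = 1)
    -- the loss function and its supremum
    (Λ : ℝ → ℝ → ℝ) (hΛmeas : Measurable (Function.uncurry Λ))
    (hΛnn : ∀ x ∈ Set.Icc a b, ∀ x' ∈ Set.Icc a b, 0 ≤ Λ x x')
    (Λmax : ℝ)
    (hΛmax : IsLUB (Set.image2 Λ (Set.Icc a b) (Set.Icc a b)) Λmax)
    -- the denoising rule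
    (g : ℝ → ℝ) (hgmeas : Measurable g) (hgr : ∀ y : ℝ, g y ∈ Set.Icc a b)
    -- the expected-loss map
    (A : ℝ → ℝ) (hA : ∀ x : ℝ, A x = ∫ y : ℝ, Λ x (g y) * F x y) :
    (∀ Δ : ℝ, 0 < Δ → ∀ x ∈ Set.Icc a b, ∀ x' ∈ Set.Icc a b, |x - x'| ≤ Δ →
      |A x - A x'| ≤ lossMod a b Λ Δ + Λmax * channelMod a b F Δ
        + lossMod a b Λ Δ * channelMod a b F Δ) ∧
    (BddAbove {r : ℝ | ∃ Δ : ℝ, 0 < Δ ∧ Δ < b - a ∧ r = lossMod a b Λ Δ / Δ} →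
     BddAbove {r : ℝ | ∃ Δ : ℝ, 0 < Δ ∧ Δ < b - a ∧ r = channelMod a b F Δ / Δ} →
      (∀ x ∈ Set.Icc a b, ∀ x' ∈ Set.Icc a b,
        |A x - A x'| ≤ (lipNormOfMod a b (lossMod a b Λ)
          + Λmax * lipNormOfMod a b (channelMod a b F)
          + (b - a) * lipNormOfMod a b (lossMod a b Λ)
              * lipNormOfMod a b (channelMod a b F)) * |x - x'|) ∧
      (∀ x ∈ Set.Icc a b, |A x| ≤ Λmax)) :=
  expected_loss_modulus_and_lipschitz_general a b F hFnn hFprob Λ hΛmeas hΛnn Λmax hΛmax g hgmeas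
    hgr A hA
end

section
/- Let (f_x)_{x∈[a,b]} be a channel on [a,b] such that sup_{y∈ℝ} ( Lip(x ↦ f_x(y)) + sup_{x∈[a,b]} f_x(y) ) < ∞, where Lip(x ↦ f_x(y)) = sup_{x≠z} |f_x(y) − f_z(y)|/|x − z|. If (P_n) is a sequence of Borel probability measures on [a,b] converging weakly to a Borel probability measure P, then the induced channel output densities converge in L¹: ∫_ℝ | ∫_{[a,b]} f_x(y) dP_n(x) − ∫_{[a,b]} f_x(y) dP(x) | dy → 0 as n → ∞. -/
/-!
Testing the weak convergence `P n ⇒ P` against the bounded continuous extension of the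
Lipschitz map `x ↦ f_x(y)` off `[a,b]` shows that the output densities converge pointwise.
By Fubini each output density is a probability density, so Scheffé's lemma upgrades
pointwise convergence to convergence in `L¹`.
-/

open MeasureTheory Filter Topology Function

section Scheffe

variable {α : Type*} [MeasurableSpace α] {μ : Measure α}

theorem integral_abs_sub_eq_two_mul_integral_max_sub {f g : α → ℝ}
    (hf : Integrable f μ) (hg : Integrable g μ) (hfg : ∫ x, f x ∂μ = ∫ x, g x ∂μ) :
    ∫ x, |f x - g x| ∂μ = 2 * ∫ x, max (g x - f x) 0 ∂μ := by
  have hpos : Integrable (fun x => max (g x - f x) 0) μ := (hg.sub hf).sup (integrable_zero _ _ _)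
  have habs : (fun x => |f x - g x|) = fun x => (f x - g x) + 2 * max (g x - f x) 0 := by
    funext x
    rcases le_total (g x) (f x) with h | h
    · rw [abs_of_nonneg (sub_nonneg.2 h), max_eq_right (sub_nonpos.2 h)]; ring
    · rw [abs_of_nonpos (sub_nonpos.2 h), max_eq_left (sub_nonneg.2 h)]; ring
  rw [habs, integral_add (f := fun x => f x - g x) (hf.sub hg) (hpos.const_mul 2),
    integral_sub hf hg, hfg, integral_const_mul, sub_self, zero_add]

/-- **Scheffé's lemma**. -/
theorem tendsto_integral_abs_sub_of_tendsto_ae {ι : Type*} {l : Filter ι}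
    [l.IsCountablyGenerated] {g : ι → α → ℝ} {h : α → ℝ}
    (hg : ∀ i, Integrable (g i) μ) (hh : Integrable h μ) (hg_nonneg : ∀ i, 0 ≤ᵐ[μ] g i)
    (hint : ∀ i, ∫ x, g i x ∂μ = ∫ x, h x ∂μ)
    (hlim : ∀ᵐ x ∂μ, Tendsto (fun i => g i x) l (𝓝 (h x))) :
    Tendsto (fun i => ∫ x, |g i x - h x| ∂μ) l (𝓝 0) := by
  simp_rw [fun i => integral_abs_sub_eq_two_mul_integral_max_sub (hg i) hh (hint i)]
  suffices Tendsto (fun i => ∫ x, max (h x - g i x) 0 ∂μ) l (𝓝 0) by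
    simpa using this.const_mul 2
  have hbound : ∀ i, ∀ᵐ x ∂μ, ‖max (h x - g i x) 0‖ ≤ ‖h x‖ := fun i => by
    filter_upwards [hg_nonneg i] with x hx
    rw [Real.norm_of_nonneg (le_max_right _ _), Real.norm_eq_abs]
    exact max_le (by linarith [le_abs_self (h x), show 0 ≤ g i x from hx]) (abs_nonneg _)
  have hlim' : ∀ᵐ x ∂μ, Tendsto (fun i => max (h x - g i x) 0) l (𝓝 0) := by
    filter_upwards [hlim] with x hx
    simpa using ((tendsto_const_nhds (x := h x)).sub hx).max (tendsto_const_nhds (x := (0 : ℝ)))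
  have hmeas : ∀ i, AEStronglyMeasurable (fun x => max (h x - g i x) 0) μ := fun i =>
    ((hh.sub (hg i)).sup (integrable_zero _ _ _)).aestronglyMeasurable
  simpa using tendsto_integral_filter_of_dominated_convergence _
    (.of_forall hmeas) (.of_forall hbound) hh.norm hlim'

end Scheffe

section Mixture

variable {X Y : Type*} [MeasurableSpace X] [MeasurableSpace Y]
  {μ : Measure X} [IsFiniteMeasure μ] {ν : Measure Y} [SFinite ν] {F : X → Y → ℝ}

theorem integrable_uncurry_of_ae_integral_eq_one
    (hF : AEStronglyMeasurable (uncurry F) (μ.prod ν)) (hnn : ∀ᵐ x ∂μ, 0 ≤ᵐ[ν] F x)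
    (h1 : ∀ᵐ x ∂μ, ∫ y, F x y ∂ν = 1) :
    Integrable (uncurry F) (μ.prod ν) := by
  refine (integrable_prod_iff hF).2 ⟨?_, (integrable_const (1 : ℝ)).congr ?_⟩
  · filter_upwards [h1] with x hx
    exact Integrable.of_integral_ne_zero (hx ▸ one_ne_zero)
  · filter_upwards [hnn, h1] with x hxnn hx
    rw [← hx]
    exact (integral_congr_ae (hxnn.mono fun y hy => Real.norm_of_nonneg hy)).symm

theorem integral_integral_eq_measureReal_univ_of_ae_integral_eq_one
    (hF : AEStronglyMeasurable (uncurry F) (μ.prod ν)) (hnn : ∀ᵐ x ∂μ, 0 ≤ᵐ[ν] F x)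
    (h1 : ∀ᵐ x ∂μ, ∫ y, F x y ∂ν = 1) :
    ∫ y, ∫ x, F x y ∂μ ∂ν = μ.real Set.univ := by
  rw [← integral_integral_swap (integrable_uncurry_of_ae_integral_eq_one hF hnn h1),
    integral_congr_ae h1, integral_const, smul_eq_mul, mul_one]

end Mixture

theorem tendsto_integral_of_continuousOn_of_ae_mem {Y ι : Type*} [TopologicalSpace Y]
    [NormalSpace Y] [MeasurableSpace Y] {s : Set Y} (hs : IsCompact s) (hs_closed : IsClosed s)
    {l : Filter ι} {μs : ι → Measure Y} {μ : Measure Y}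
    (hμs : ∀ i, ∀ᵐ y ∂μs i, y ∈ s) (hμ : ∀ᵐ y ∂μ, y ∈ s)
    (hweak : ∀ f : BoundedContinuousFunction Y ℝ,
      Tendsto (fun i => ∫ y, f y ∂μs i) l (𝓝 (∫ y, f y ∂μ)))
    {f : Y → ℝ} (hf : ContinuousOn f s) :
    Tendsto (fun i => ∫ y, f y ∂μs i) l (𝓝 (∫ y, f y ∂μ)) := by
  have : CompactSpace s := isCompact_iff_compactSpace.mp hs
  obtain ⟨g, -, hg⟩ := BoundedContinuousFunction.exists_norm_eq_domRestrict_eq_of_closed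
    (BoundedContinuousFunction.mkOfCompact ⟨s.domRestrict f, hf.domRestrict⟩) hs_closed
  have hgf : ∀ ν : Measure Y, (∀ᵐ y ∂ν, y ∈ s) → ∫ y, g y ∂ν = ∫ y, f y ∂ν :=
    fun ν hν => integral_congr_ae <| hν.mono fun y hy => DFunLike.congr_fun hg ⟨y, hy⟩
  simpa only [hgf _ (hμs _), hgf _ hμ] using hweak g

theorem channel_output_L1_continuity_general
    (a b : ℝ)
    -- the channel
    (F : ℝ → ℝ → ℝ)
    (hFmeas : Measurable (Function.uncurry F))
    (hFnn : ∀ x ∈ Set.Icc a b, ∀ y : ℝ, 0 ≤ F x y)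
    (hFprob : ∀ x ∈ Set.Icc a b, ∫ y : ℝ, F x y = 1)
    -- uniform boundedness of `Lip(x ↦ f_x(y)) + sup_x f_x(y)` over `y`
    (M : ℝ)
    (hFlip : ∀ y : ℝ, ∀ x ∈ Set.Icc a b, ∀ z ∈ Set.Icc a b,
      |F x y - F z y| ≤ M * |x - z|)
    -- the input distributions
    (P : ℕ → Measure ℝ) (Plim : Measure ℝ)
    [∀ n, IsProbabilityMeasure (P n)] [IsProbabilityMeasure Plim]
    (hPsupp : ∀ n, P n (Set.Icc a b)ᶜ = 0) (hPlimsupp : Plim (Set.Icc a b)ᶜ = 0)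
    -- weak convergence `P n ⇒ Plim`
    (hweak : ∀ f : BoundedContinuousFunction ℝ ℝ,
      Tendsto (fun n => ∫ x, f x ∂(P n)) atTop (nhds (∫ x, f x ∂Plim))) :
    Tendsto (fun n => ∫ y : ℝ, |(∫ x, F x y ∂(P n)) - ∫ x, F x y ∂Plim|)
      atTop (nhds 0) := by
  have hsupp : ∀ n, ∀ᵐ x ∂P n, x ∈ Set.Icc a b := fun n => mem_ae_iff.2 (hPsupp n)
  have hlimsupp : ∀ᵐ x ∂Plim, x ∈ Set.Icc a b := mem_ae_iff.2 hPlimsupp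
  have hpointwise (y : ℝ) :
      Tendsto (fun n => ∫ x, F x y ∂P n) atTop (𝓝 (∫ x, F x y ∂Plim)) :=
    tendsto_integral_of_continuousOn_of_ae_mem isCompact_Icc isClosed_Icc hsupp hlimsupp hweak
      (LipschitzOnWith.of_dist_le' fun x hx z hz => hFlip y x hx z hz).continuousOn
  have hdensity (Q : Measure ℝ) [IsProbabilityMeasure Q] (hQ : ∀ᵐ x ∂Q, x ∈ Set.Icc a b) :
      Integrable (fun y => ∫ x, F x y ∂Q) ∧ ∫ y, ∫ x, F x y ∂Q = 1 ∧
        ∀ y, 0 ≤ ∫ x, F x y ∂Q := by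
    have hnn : ∀ᵐ x ∂Q, 0 ≤ᵐ[volume] F x := hQ.mono fun x hx => .of_forall (hFnn x hx)
    have h1 : ∀ᵐ x ∂Q, ∫ y, F x y = 1 := hQ.mono hFprob
    have hF := hFmeas.aestronglyMeasurable (μ := Q.prod volume)
    refine ⟨(integrable_uncurry_of_ae_integral_eq_one hF hnn h1).integral_prod_right, ?_,
      fun y => integral_nonneg_of_ae (hQ.mono fun x hx => hFnn x hx y)⟩
    rw [integral_integral_eq_measureReal_univ_of_ae_integral_eq_one hF hnn h1, probReal_univ]
  obtain ⟨hlim_int, hlim_one, -⟩ := hdensity Plim hlimsupp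
  exact tendsto_integral_abs_sub_of_tendsto_ae (fun n => (hdensity (P n) (hsupp n)).1) hlim_int
    (fun n => .of_forall (hdensity (P n) (hsupp n)).2.2)
    (fun n => (hdensity (P n) (hsupp n)).2.1.trans hlim_one.symm) (.of_forall hpointwise)

/-- Weak-to-L¹ continuity of the channel output map: for a channel
whose densities are uniformly bounded and uniformly Lipschitz in the input symbol,
weak convergence `P_n ⇒ P` of input distributions implies L¹ convergence of the induced
output densities `T(P_n)(y) = ∫ f_x(y) dP_n(x)`. -/
theorem channel_output_L1_continuity
    (a b : ℝ) (hab : a < b)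
    -- the channel
    (F : ℝ → ℝ → ℝ)
    (hFmeas : Measurable (Function.uncurry F))
    (hFnn : ∀ x ∈ Set.Icc a b, ∀ y : ℝ, 0 ≤ F x y)
    (hFprob : ∀ x ∈ Set.Icc a b, ∫ y : ℝ, F x y = 1)
    -- uniform boundedness of `Lip(x ↦ f_x(y)) + sup_x f_x(y)` over `y`
    (M : ℝ)
    (hFlip : ∀ y : ℝ, ∀ x ∈ Set.Icc a b, ∀ z ∈ Set.Icc a b,
      |F x y - F z y| ≤ M * |x - z|)
    (hFbdd : ∀ y : ℝ, ∀ x ∈ Set.Icc a b, F x y ≤ M)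
    -- the input distributions
    (P : ℕ → Measure ℝ) (Plim : Measure ℝ)
    [∀ n, IsProbabilityMeasure (P n)] [IsProbabilityMeasure Plim]
    (hPsupp : ∀ n, P n (Set.Icc a b)ᶜ = 0) (hPlimsupp : Plim (Set.Icc a b)ᶜ = 0)
    -- weak convergence `P n ⇒ Plim`
    (hweak : ∀ f : BoundedContinuousFunction ℝ ℝ,
      Tendsto (fun n => ∫ x, f x ∂(P n)) atTop (nhds (∫ x, f x ∂Plim))) :
    Tendsto (fun n => ∫ y : ℝ, |(∫ x, F x y ∂(P n)) - ∫ x, F x y ∂Plim|)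
      atTop (nhds 0) :=
  channel_output_L1_continuity_general a b F hFmeas hFnn hFprob M hFlip P Plim hPsupp hPlimsupp
    hweak
end

section
/- Let (Ω, F, μ) be a probability space with X : Ω → [a,b] a random variable taking values in a compact interval, and let Λ : [a,b] × [a,b] → [0,∞) be bounded and continuous. Define the Bayes envelope U(ν) = inf_{x̂ ∈ [a,b]} ∫_{[a,b]} Λ(x, x̂) dν(x) for Borel probability measures ν on [a,b]. Let Y : Ω → ℝ^m and Z : Ω → ℝ^p be random vectors, and let μ_{X|Y} and μ_{X|(Y,Z)} denote regular conditional distributions of X given Y and given the pair (Y,Z), respectively. Then E[ U(μ_{X|(Y,Z)}) ] ≤ E[ U(μ_{X|Y}) ]: conditioning on the additional observation Z does not increase the expected Bayes envelope. -/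
open MeasureTheory ProbabilityTheory

/-- The Bayes envelope `U(ν) = inf_{x̂ ∈ [a,b]} ∫ Λ(x, x̂) dν(x)`. -/
noncomputable def bayesEnvelope (a b : ℝ) (Λ : ℝ → ℝ → ℝ) (ν : Measure ℝ) : ℝ :=
  sInf {r : ℝ | ∃ xhat ∈ Set.Icc a b, r = ∫ x, Λ x xhat ∂ν}

open Set TopologicalSpace Function

/-!
Extend `Λ` continuously to `ℝ²` by clamping both arguments to `[a, b]`. For a measure carried by
`[a, b]` the expected loss `x̂ ↦ ∫ Λ(x, x̂) dν` is then continuous, so the Bayes envelope is an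
infimum over a countable dense set of actions. This makes it measurable along a kernel and yields,
for every `ε > 0`, a measurable `ε`-optimal decision rule `x̂(Y)`. As `x̂(Y)` is also a function of
`(Y, Z)`, disintegrating `E[Λ(X, x̂(Y))]` along either observation gives
`E[U(μ_{X|(Y,Z)})] ≤ E[Λ(X, x̂(Y))] ≤ E[U(μ_{X|Y})] + ε`.
-/

lemma sInf_image_eq_iInf_of_denseRange {α β ι : Type*} [TopologicalSpace α]
    [ConditionallyCompleteLinearOrder β] [TopologicalSpace β] [ClosedIciTopology β]
    {s : Set α} {f : α → β} (hf : ContinuousOn f s) {d : ι → s} (hd : DenseRange d) :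
    sInf (f '' s) = ⨅ i, f (d i) := by
  rw [sInf_image']
  exact (hd.ciInf' (continuousOn_iff_continuous_domRestrict.1 hf)).symm.trans
    (iInf_range' (s.domRestrict f) d)

lemma exists_continuous_extension_of_Icc_prod {a b C : ℝ} (hab : a ≤ b) {Λ : ℝ → ℝ → ℝ}
    (hΛcont : ContinuousOn (uncurry Λ) (Icc a b ×ˢ Icc a b))
    (hΛnn : ∀ x ∈ Icc a b, ∀ y ∈ Icc a b, 0 ≤ Λ x y)
    (hΛC : ∀ x ∈ Icc a b, ∀ y ∈ Icc a b, Λ x y ≤ C) :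
    ∃ L : ℝ → ℝ → ℝ, Continuous (uncurry L) ∧ (∀ x y, |L x y| ≤ C) ∧
      ∀ x ∈ Icc a b, ∀ y ∈ Icc a b, L x y = Λ x y := by
  refine ⟨fun x y => Λ (projIcc a b hab x) (projIcc a b hab y), ?_, fun x y => ?_,
    fun x hx y hy => by simp only [projIcc_of_mem hab hx, projIcc_of_mem hab hy]⟩
  · have hproj : Continuous fun q : ℝ × ℝ =>
        ((projIcc a b hab q.1 : ℝ), (projIcc a b hab q.2 : ℝ)) := by
      fun_prop
    exact hΛcont.comp_continuous hproj fun q => ⟨(projIcc a b hab _).2, (projIcc a b hab _).2⟩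
  · rw [abs_of_nonneg (hΛnn _ (projIcc a b hab x).2 _ (projIcc a b hab y).2)]
    exact hΛC _ (projIcc a b hab x).2 _ (projIcc a b hab y).2

noncomputable def expectedLoss {β D : Type*} [MeasurableSpace β] (L : β → D → ℝ) (ν : Measure β)
    (y : D) : ℝ :=
  ∫ x, L x y ∂ν

section ExpectedLoss

variable {β D : Type*} [MeasurableSpace β] {L : β → D → ℝ} {C : ℝ}

lemma abs_expectedLoss_le (hLC : ∀ x y, |L x y| ≤ C) (ν : Measure β) [IsProbabilityMeasure ν]
    (y : D) : |expectedLoss L ν y| ≤ C := by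
  simpa [expectedLoss] using
    norm_integral_le_of_norm_le_const (μ := ν) (f := fun x => L x y) (ae_of_all _ fun x => hLC x y)

lemma continuous_expectedLoss [TopologicalSpace β] [OpensMeasurableSpace β] [TopologicalSpace D]
    [FirstCountableTopology D] (hL : Continuous (uncurry L)) (hLC : ∀ x y, |L x y| ≤ C)
    (ν : Measure β) [IsFiniteMeasure ν] : Continuous (expectedLoss L ν) :=
  continuous_of_dominated
    (fun y => (hL.comp (by fun_prop : Continuous fun x => (x, y))).aestronglyMeasurable)
    (fun y => ae_of_all _ fun x => hLC x y) (integrable_const C)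
    (ae_of_all _ fun x => hL.comp (by fun_prop : Continuous fun y => (x, y)))

lemma measurable_expectedLoss_kernel [MeasurableSpace D] {W : Type*} [MeasurableSpace W]
    (κ : Kernel W β) [IsSFiniteKernel κ] (hL : Measurable (uncurry L)) {δ : W → D}
    (hδ : Measurable δ) : Measurable fun w => expectedLoss L (κ w) (δ w) :=
  (StronglyMeasurable.integral_kernel_prod_right (f := fun w x => L x (δ w))
    (hL.comp (measurable_snd.prodMk (hδ.comp measurable_fst))).stronglyMeasurable).measurable

end ExpectedLoss

section Disintegration

variable {Ω W β : Type*} [MeasurableSpace Ω] [MeasurableSpace W] [MeasurableSpace β]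
  {μ : Measure Ω} [IsProbabilityMeasure μ] {V : Ω → W} {X : Ω → β} {κ : Kernel W β}
  [IsMarkovKernel κ]

lemma map_prodMk_eq_compProd (hV : Measurable V) (hX : Measurable X)
    (hκ : ∀ B : Set β, MeasurableSet B → ∀ A : Set W, MeasurableSet A →
      μ {ω | X ω ∈ B ∧ V ω ∈ A} = ∫⁻ w in A, κ w B ∂(μ.map V)) :
    μ.map (fun ω => (V ω, X ω)) = μ.map V ⊗ₘ κ := by
  have := Measure.isProbabilityMeasure_map (μ := μ) hV.aemeasurable
  have := Measure.isProbabilityMeasure_map (μ := μ) (hV.prodMk hX).aemeasurable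
  refine ext_of_generate_finite _ generateFrom_prod.symm isPiSystem_prod ?_ (by simp)
  rintro _ ⟨A, hA, B, hB, rfl⟩
  rw [Measure.map_apply (hV.prodMk hX) (hA.prod hB), Measure.compProd_apply_prod hA hB,
    ← hκ B hB A hA]
  congr 1
  ext ω
  exact and_comm

lemma ae_ae_mem_of_map_eq_compProd (hV : Measurable V) (hX : Measurable X)
    (hκ : μ.map (fun ω => (V ω, X ω)) = μ.map V ⊗ₘ κ) {s : Set β} (hs : MeasurableSet s)
    (hXs : ∀ ω, X ω ∈ s) : ∀ᵐ ω ∂μ, ∀ᵐ x ∂κ (V ω), x ∈ s := by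
  have hmap : ∀ᵐ q ∂(μ.map fun ω => (V ω, X ω)), q.2 ∈ s :=
    (ae_map_iff (hV.prodMk hX).aemeasurable (measurable_snd hs)).2 (ae_of_all _ hXs)
  rw [hκ] at hmap
  exact ae_of_ae_map hV.aemeasurable (Measure.ae_ae_of_ae_compProd hmap)

lemma integral_expectedLoss_kernel_comp {D : Type*} [MeasurableSpace D] (hV : Measurable V)
    (hX : Measurable X) (hκ : μ.map (fun ω => (V ω, X ω)) = μ.map V ⊗ₘ κ) {L : β → D → ℝ}
    (hL : Measurable (uncurry L)) {C : ℝ} (hLC : ∀ x y, |L x y| ≤ C) {δ : W → D}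
    (hδ : Measurable δ) :
    ∫ ω, expectedLoss L (κ (V ω)) (δ (V ω)) ∂μ = ∫ ω, L (X ω) (δ (V ω)) ∂μ := by
  have hf : Measurable fun q : W × β => L q.2 (δ q.1) :=
    hL.comp (measurable_snd.prodMk (hδ.comp measurable_fst))
  have hint : Integrable (fun q : W × β => L q.2 (δ q.1)) (μ.map V ⊗ₘ κ) :=
    .of_bound hf.aestronglyMeasurable C (ae_of_all _ fun q => hLC _ _)
  calc ∫ ω, expectedLoss L (κ (V ω)) (δ (V ω)) ∂μ
      = ∫ w, expectedLoss L (κ w) (δ w) ∂(μ.map V) :=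
        (integral_map hV.aemeasurable
          (measurable_expectedLoss_kernel κ hL hδ).aestronglyMeasurable).symm
    _ = ∫ q, L q.2 (δ q.1) ∂(μ.map V ⊗ₘ κ) := (Measure.integral_compProd hint).symm
    _ = ∫ ω, L (X ω) (δ (V ω)) ∂μ := by
        rw [← hκ, integral_map (hV.prodMk hX).aemeasurable hf.aestronglyMeasurable]

end Disintegration

lemma exists_measurable_lt_iInf_add {W : Type*} [MeasurableSpace W] {g : ℕ → W → ℝ}
    (hg : ∀ n, Measurable (g n)) {ε : ℝ} (hε : 0 < ε) :
    ∃ ξ : W → ℕ, Measurable ξ ∧ ∀ w, g (ξ w) w < (⨅ n, g n w) + ε := by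
  classical
  have hex : ∀ w, ∃ n, g n w < (⨅ n, g n w) + ε := fun w =>
    exists_lt_of_ciInf_lt (lt_add_of_pos_right _ hε)
  exact ⟨fun w => Nat.find (hex w),
    measurable_find hex fun n => measurableSet_lt (hg n) ((Measurable.iInf hg).add_const ε),
    fun w => Nat.find_spec (hex w)⟩

section AbsBounded

variable {ι : Type*} {f : ι → ℝ} {C : ℝ}

lemma bddBelow_range_of_abs_le (hf : ∀ i, |f i| ≤ C) : BddBelow (range f) :=
  ⟨-C, by rintro _ ⟨i, rfl⟩; exact (abs_le.1 (hf i)).1⟩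

lemma abs_ciInf_le [Nonempty ι] (hf : ∀ i, |f i| ≤ C) : |⨅ i, f i| ≤ C := by
  obtain ⟨i⟩ := ‹Nonempty ι›
  exact abs_le.2 ⟨le_ciInf fun j => (abs_le.1 (hf j)).1,
    (ciInf_le (bddBelow_range_of_abs_le hf) i).trans (abs_le.1 (hf i)).2⟩

end AbsBounded

theorem integral_iInf_expectedLoss_le_of_eq_comp {Ω W₁ W₂ β D : Type*} [MeasurableSpace Ω]
    [MeasurableSpace W₁] [MeasurableSpace W₂] [MeasurableSpace β] [MeasurableSpace D]
    {μ : Measure Ω} [IsProbabilityMeasure μ] {X : Ω → β} (hX : Measurable X)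
    {V₁ : Ω → W₁} {V₂ : Ω → W₂} (hV₂ : Measurable V₂) {g : W₂ → W₁} (hg : Measurable g)
    (hV : V₁ = g ∘ V₂) {κ₁ : Kernel W₁ β} [IsMarkovKernel κ₁] {κ₂ : Kernel W₂ β}
    [IsMarkovKernel κ₂] (h₁ : μ.map (fun ω => (V₁ ω, X ω)) = μ.map V₁ ⊗ₘ κ₁)
    (h₂ : μ.map (fun ω => (V₂ ω, X ω)) = μ.map V₂ ⊗ₘ κ₂) {L : β → D → ℝ}
    (hL : Measurable (uncurry L)) {C : ℝ} (hLC : ∀ x y, |L x y| ≤ C) (d : ℕ → D) :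
    ∫ ω, ⨅ n, expectedLoss L (κ₂ (V₂ ω)) (d n) ∂μ
      ≤ ∫ ω, ⨅ n, expectedLoss L (κ₁ (V₁ ω)) (d n) ∂μ := by
  subst hV
  have hV₁ : Measurable (g ∘ V₂) := hg.comp hV₂
  have hrisk₁ (w : W₁) (y : D) : |expectedLoss L (κ₁ w) y| ≤ C := abs_expectedLoss_le hLC _ y
  have hrisk₂ (w : W₂) (y : D) : |expectedLoss L (κ₂ w) y| ≤ C := abs_expectedLoss_le hLC _ y
  have hmeas₁ : Measurable fun w => ⨅ n, expectedLoss L (κ₁ w) (d n) :=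
    .iInf fun n => measurable_expectedLoss_kernel κ₁ hL measurable_const
  have hmeas₂ : Measurable fun w => ⨅ n, expectedLoss L (κ₂ w) (d n) :=
    .iInf fun n => measurable_expectedLoss_kernel κ₂ hL measurable_const
  have hint {f : Ω → ℝ} (hf : Measurable f) (hfC : ∀ ω, |f ω| ≤ C) : Integrable f μ :=
    .of_bound hf.aestronglyMeasurable C (ae_of_all _ hfC)
  have hint₁ : Integrable (fun ω => ⨅ n, expectedLoss L (κ₁ (g (V₂ ω))) (d n)) μ :=
    hint (hmeas₁.comp hV₁) fun ω => abs_ciInf_le fun n => hrisk₁ _ (d n)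
  refine le_of_forall_pos_le_add fun ε hε => ?_
  obtain ⟨ξ, hξ, hξ_lt⟩ := exists_measurable_lt_iInf_add
    (g := fun n w => expectedLoss L (κ₁ w) (d n))
    (fun n => measurable_expectedLoss_kernel κ₁ hL measurable_const) hε
  have hδ : Measurable (d ∘ ξ) := measurable_from_top.comp hξ
  calc ∫ ω, ⨅ n, expectedLoss L (κ₂ (V₂ ω)) (d n) ∂μ
      ≤ ∫ ω, expectedLoss L (κ₂ (V₂ ω)) ((d ∘ ξ ∘ g) (V₂ ω)) ∂μ :=
        integral_mono (hint (hmeas₂.comp hV₂) fun ω => abs_ciInf_le fun n => hrisk₂ _ (d n))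
          (hint ((measurable_expectedLoss_kernel κ₂ hL (hδ.comp hg)).comp hV₂)
            fun ω => hrisk₂ _ _)
          fun ω => ciInf_le (bddBelow_range_of_abs_le fun n => hrisk₂ _ (d n)) _
    _ = ∫ ω, L (X ω) ((d ∘ ξ ∘ g) (V₂ ω)) ∂μ :=
        integral_expectedLoss_kernel_comp hV₂ hX h₂ hL hLC (hδ.comp hg)
    _ = ∫ ω, expectedLoss L (κ₁ (g (V₂ ω))) ((d ∘ ξ) (g (V₂ ω))) ∂μ :=
        (integral_expectedLoss_kernel_comp hV₁ hX h₁ hL hLC hδ).symm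
    _ ≤ ∫ ω, ((⨅ n, expectedLoss L (κ₁ (g (V₂ ω))) (d n)) + ε) ∂μ :=
        integral_mono (hint ((measurable_expectedLoss_kernel κ₁ hL hδ).comp hV₁)
            fun ω => hrisk₁ _ _)
          (hint₁.add (integrable_const ε)) fun ω => (hξ_lt _).le
    _ = ∫ ω, ⨅ n, expectedLoss L (κ₁ (g (V₂ ω))) (d n) ∂μ + ε := by
        rw [integral_add hint₁ (integrable_const ε), integral_const, probReal_univ, one_smul]

lemma bayesEnvelope_eq_iInf_expectedLoss {a b C : ℝ} {Λ L : ℝ → ℝ → ℝ}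
    (hL : Continuous (uncurry L)) (hLC : ∀ x y, |L x y| ≤ C)
    (hLΛ : ∀ x ∈ Icc a b, ∀ y ∈ Icc a b, L x y = Λ x y) {ν : Measure ℝ} [IsFiniteMeasure ν]
    (hν : ∀ᵐ x ∂ν, x ∈ Icc a b) {d : ℕ → Icc a b} (hd : DenseRange d) :
    bayesEnvelope a b Λ ν = ⨅ n, expectedLoss L ν (d n) := by
  have hset : {r : ℝ | ∃ y ∈ Icc a b, r = ∫ x, Λ x y ∂ν} = expectedLoss L ν '' Icc a b := by
    ext r
    refine exists_congr fun y => and_congr_right fun hy => ?_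
    rw [eq_comm, expectedLoss, integral_congr_ae (hν.mono fun x hx => hLΛ x hx y hy)]
  rw [bayesEnvelope, hset]
  exact sInf_image_eq_iInf_of_denseRange (continuous_expectedLoss hL hLC ν).continuousOn hd

/-- Extra observations do not increase the expected Bayes envelope:
if `κ₁` is a regular conditional distribution of `X` given `Y` and `κ₂` one of `X`
given the pair `(Y, Z)`, then `E[U(μ_{X|(Y,Z)})] ≤ E[U(μ_{X|Y})]`. -/
theorem expected_bayesEnvelope_anti_conditioning
    (a b : ℝ) (hab : a < b)
    -- the loss function: bounded and continuous
    (Λ : ℝ → ℝ → ℝ)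
    (hΛcont : ContinuousOn (Function.uncurry Λ) (Set.Icc a b ×ˢ Set.Icc a b))
    (hΛnn : ∀ x ∈ Set.Icc a b, ∀ x' ∈ Set.Icc a b, 0 ≤ Λ x x')
    (C : ℝ) (hΛbdd : ∀ x ∈ Set.Icc a b, ∀ x' ∈ Set.Icc a b, Λ x x' ≤ C)
    -- the probability space and the random variables
    (Ω : Type*) [MeasurableSpace Ω] (μ : Measure Ω) [IsProbabilityMeasure μ]
    (m p : ℕ)
    (X : Ω → ℝ) (hXmeas : Measurable X) (hXrange : ∀ ω, X ω ∈ Set.Icc a b)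
    (Y : Ω → Fin m → ℝ) (hYmeas : Measurable Y)
    (Z : Ω → Fin p → ℝ) (hZmeas : Measurable Z)
    -- a regular conditional distribution of `X` given `Y`
    (κ₁ : Kernel (Fin m → ℝ) ℝ) [IsMarkovKernel κ₁]
    (hκ₁ : ∀ B : Set ℝ, MeasurableSet B → ∀ A : Set (Fin m → ℝ), MeasurableSet A →
      μ {ω | X ω ∈ B ∧ Y ω ∈ A} = ∫⁻ w in A, κ₁ w B ∂(μ.map Y))
    -- a regular conditional distribution of `X` given `(Y, Z)`
    (κ₂ : Kernel ((Fin m → ℝ) × (Fin p → ℝ)) ℝ) [IsMarkovKernel κ₂]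
    (hκ₂ : ∀ B : Set ℝ, MeasurableSet B →
      ∀ A : Set ((Fin m → ℝ) × (Fin p → ℝ)), MeasurableSet A →
      μ {ω | X ω ∈ B ∧ (Y ω, Z ω) ∈ A}
        = ∫⁻ w in A, κ₂ w B ∂(μ.map (fun ω => (Y ω, Z ω)))) :
    ∫ ω, bayesEnvelope a b Λ (κ₂ (Y ω, Z ω)) ∂μ
      ≤ ∫ ω, bayesEnvelope a b Λ (κ₁ (Y ω)) ∂μ := by
  obtain ⟨L, hL, hLC, hLΛ⟩ := exists_continuous_extension_of_Icc_prod hab.le hΛcont hΛnn hΛbdd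
  have : Nonempty (Icc a b) := ⟨⟨a, left_mem_Icc.2 hab.le⟩⟩
  have hd := denseRange_denseSeq (Icc a b)
  have hYZ : Measurable fun ω => (Y ω, Z ω) := hYmeas.prodMk hZmeas
  have h₁ := map_prodMk_eq_compProd hYmeas hXmeas hκ₁
  have h₂ := map_prodMk_eq_compProd hYZ hXmeas hκ₂
  have hU₁ := (ae_ae_mem_of_map_eq_compProd hYmeas hXmeas h₁ measurableSet_Icc hXrange).mono
    fun ω hω => bayesEnvelope_eq_iInf_expectedLoss hL hLC hLΛ hω hd
  have hU₂ := (ae_ae_mem_of_map_eq_compProd hYZ hXmeas h₂ measurableSet_Icc hXrange).mono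
    fun ω hω => bayesEnvelope_eq_iInf_expectedLoss hL hLC hLΛ hω hd
  rw [integral_congr_ae hU₁, integral_congr_ae hU₂]
  exact integral_iInf_expectedLoss_le_of_eq_comp hXmeas hYZ measurable_fst rfl h₁ h₂
    hL.measurable hLC _
end
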